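/- For 1 ≤ k ≤ n, the total number of 1's contained in runs of ones of length at least k, summed over all binary strings of length n, equals (n·(k+1) - k·(k-1))·2^(n-k-1). -/
import Mathlib

/-- The maximal runs of a binary string, as a list of (bit, length) pairs,
from left to right. -/
def runs : List Bool → List (Bool × ℕ)
  | [] => []
  | b :: l =>
    match runs l with
    | [] => [(b, 1)]
    | (c, k) :: rest => if b = c then (c, k + 1) :: rest else (b, 1) :: (c, k) :: rest

/-- The lengths of the maximal runs of ones (nonnull runs of ones) of a binary string. -/
def oneRuns (l : List Bool) : List ℕ :=
  (runs l).filterMap fun p => if p.1 then some p.2 else none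

namespace Stmt10Aux

/-- Length of the leading run of ones. -/
def hd1 (l : List Bool) : ℕ :=
  match runs l with
  | (true, m) :: _ => m
  | _ => 0

/-- Number of ones in runs of ones of length at least `k`. -/
def S (k : ℕ) (l : List Bool) : ℕ := ((oneRuns l).filter (fun x => k ≤ x)).sum

def payoff (k m : ℕ) : ℕ := if k ≤ m then 1 else if m + 1 = k then k else 0

lemma hd1_nil : hd1 [] = 0 := rfl

lemma hd1_cons_false (l : List Bool) : hd1 (false :: l) = 0 := by
  unfold hd1
  rcases h : runs l with _ | ⟨⟨c, m⟩, rest⟩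
  · simp [runs, h]
  · cases c <;> simp [runs, h]

lemma hd1_cons_true (l : List Bool) : hd1 (true :: l) = hd1 l + 1 := by
  unfold hd1
  rcases h : runs l with _ | ⟨⟨c, m⟩, rest⟩
  · simp [runs, h]
  · cases c <;> simp [runs, h]

lemma S_cons_false (k : ℕ) (l : List Bool) : S k (false :: l) = S k l := by
  unfold S oneRuns
  rcases h : runs l with _ | ⟨⟨c, m⟩, rest⟩
  · simp [runs, h]
  · cases c <;> simp [runs, h]

lemma S_cons_true (k : ℕ) (hk : 1 ≤ k) (l : List Bool) :
    S k (true :: l) = S k l + payoff k (hd1 l) := by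
  unfold S oneRuns hd1 payoff
  rcases h : runs l with _ | ⟨⟨c, m⟩, rest⟩
  · simp [runs, h, List.filter_cons]
    split_ifs <;> simp <;> omega
  · cases c
    · simp [runs, h, List.filter_cons]
      split_ifs <;> simp <;> omega
    · simp [runs, h, List.filter_cons]
      split_ifs <;> simp <;> omega

lemma runs_sum (l : List Bool) : ((runs l).map Prod.snd).sum = l.length := by
  induction l with
  | nil => rfl
  | cons b l ih =>
    rcases h : runs l with _ | ⟨⟨c, m⟩, rest⟩
    · simp only [runs, h, List.map_nil, List.sum_nil] at ih
      simp [runs, h, ← ih]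
    · by_cases hbc : b = c
      · simp [runs, h, hbc] at ih ⊢; omega
      · simp [runs, h, hbc] at ih ⊢; omega

lemma mem_oneRuns_le {x : ℕ} {l : List Bool} (hx : x ∈ oneRuns l) : x ≤ l.length := by
  rw [oneRuns, List.mem_filterMap] at hx
  obtain ⟨⟨c, m⟩, hmem, hval⟩ := hx
  have hx' : x = m := by
    by_cases hc : c = true <;> simp [hc] at hval; omega
  subst hx'
  have : x ∈ (runs l).map Prod.snd := List.mem_map.mpr ⟨(c, x), hmem, rfl⟩
  calc x ≤ ((runs l).map Prod.snd).sum := List.single_le_sum (fun _ _ => Nat.zero_le _) _ this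
    _ = l.length := runs_sum l

lemma S_eq_zero {k : ℕ} {l : List Bool} (h : l.length < k) : S k l = 0 := by
  unfold S
  rw [List.filter_eq_nil_iff.mpr, List.sum_nil]
  intro x hx
  have := mem_oneRuns_le hx
  simp only [decide_eq_true_eq]
  omega

lemma sum_cons (n : ℕ) (f : List Bool → ℕ) :
    ∑ s : Fin (n+1) → Bool, f (List.ofFn s)
      = ∑ t : Fin n → Bool, (f (false :: List.ofFn t) + f (true :: List.ofFn t)) := by
  rw [← (Fin.consEquiv (fun _ : Fin (n+1) => Bool)).sum_comp (fun s => f (List.ofFn s))]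
  rw [Fintype.sum_prod_type_right]
  refine Finset.sum_congr rfl fun t _ => ?_
  rw [Fintype.sum_bool]
  simp [Fin.consEquiv, List.ofFn_succ, add_comm]

lemma count_ge (n j : ℕ) :
    ∑ s : Fin n → Bool, (if j ≤ hd1 (List.ofFn s) then (1:ℕ) else 0)
      = if j ≤ n then 2 ^ (n - j) else 0 := by
  induction n generalizing j with
  | zero =>
    cases j <;> simp [hd1_nil]
  | succ n ih =>
    rw [sum_cons n (fun l => if j ≤ hd1 l then (1:ℕ) else 0)]
    simp only [hd1_cons_false, hd1_cons_true]
    cases j with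
    | zero => simp [Finset.sum_const, two_mul, pow_succ, mul_comm]
    | succ j =>
      have h1 : ∀ t : Fin n → Bool,
          ((if j + 1 ≤ (0:ℕ) then (1:ℕ) else 0)
            + if j + 1 ≤ hd1 (List.ofFn t) + 1 then (1:ℕ) else 0)
            = (if j ≤ hd1 (List.ofFn t) then (1:ℕ) else 0) := by
        intro t; split_ifs <;> omega
      rw [Finset.sum_congr rfl fun t _ => h1 t, ih j]
      rcases le_or_gt j n with h | h
      · rw [if_pos h, if_pos (Nat.succ_le_succ h), Nat.succ_sub_succ]
      · rw [if_neg (by omega), if_neg (by omega)]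

lemma count_payoff (k n : ℕ) (hk : 1 ≤ k) (hkn : k ≤ n) :
    ∑ s : Fin n → Bool, payoff k (hd1 (List.ofFn s)) = (k + 1) * 2 ^ (n - k) := by
  have key : ∀ m : ℕ, payoff k m + k * (if k ≤ m then (1:ℕ) else 0)
      = k * (if k - 1 ≤ m then (1:ℕ) else 0) + (if k ≤ m then (1:ℕ) else 0) := by
    intro m; unfold payoff; split_ifs <;> omega
  have e1 : ∑ s : Fin n → Bool, (if k ≤ hd1 (List.ofFn s) then (1:ℕ) else 0) = 2 ^ (n - k) := by
    rw [count_ge, if_pos hkn]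
  have e2 : ∑ s : Fin n → Bool, (if k - 1 ≤ hd1 (List.ofFn s) then (1:ℕ) else 0)
      = 2 ^ (n - k + 1) := by
    rw [count_ge, if_pos (by omega)]
    congr 1; omega
  have main : (∑ s : Fin n → Bool, payoff k (hd1 (List.ofFn s))) + k * 2 ^ (n - k)
      = k * 2 ^ (n - k + 1) + 2 ^ (n - k) := by
    rw [← e1, ← e2, Finset.mul_sum, Finset.mul_sum, ← Finset.sum_add_distrib,
      ← Finset.sum_add_distrib]
    exact Finset.sum_congr rfl fun s _ => key _
  have hp : k * 2 ^ (n - k + 1) = k * 2 ^ (n - k) + k * 2 ^ (n - k) := by ring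
  have hf : (k + 1) * 2 ^ (n - k) = k * 2 ^ (n - k) + 2 ^ (n - k) := by ring
  omega

lemma count_payoff' (k : ℕ) (hk : 1 ≤ k) :
    ∑ s : Fin (k-1) → Bool, payoff k (hd1 (List.ofFn s)) = k := by
  have key : ∀ m : ℕ, payoff k m + k * (if k ≤ m then (1:ℕ) else 0)
      = k * (if k - 1 ≤ m then (1:ℕ) else 0) + (if k ≤ m then (1:ℕ) else 0) := by
    intro m; unfold payoff; split_ifs <;> omega
  have e1 : ∑ s : Fin (k-1) → Bool, (if k ≤ hd1 (List.ofFn s) then (1:ℕ) else 0) = 0 := by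
    rw [count_ge, if_neg (by omega)]
  have e2 : ∑ s : Fin (k-1) → Bool, (if k - 1 ≤ hd1 (List.ofFn s) then (1:ℕ) else 0) = 1 := by
    rw [count_ge, if_pos le_rfl, Nat.sub_self, pow_zero]
  have main : (∑ s : Fin (k-1) → Bool, payoff k (hd1 (List.ofFn s)))
        + k * ∑ s : Fin (k-1) → Bool, (if k ≤ hd1 (List.ofFn s) then (1:ℕ) else 0)
      = k * (∑ s : Fin (k-1) → Bool, (if k - 1 ≤ hd1 (List.ofFn s) then (1:ℕ) else 0))
        + ∑ s : Fin (k-1) → Bool, (if k ≤ hd1 (List.ofFn s) then (1:ℕ) else 0) := by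
    rw [Finset.mul_sum, Finset.mul_sum, ← Finset.sum_add_distrib, ← Finset.sum_add_distrib]
    exact Finset.sum_congr rfl fun s _ => key _
  rw [e1, e2] at main
  omega

/-- Total over all strings of length `n`. -/
def F (k n : ℕ) : ℕ := ∑ s : Fin n → Bool, S k (List.ofFn s)

lemma F_succ (k n : ℕ) (hk : 1 ≤ k) :
    F k (n + 1) = 2 * F k n + ∑ s : Fin n → Bool, payoff k (hd1 (List.ofFn s)) := by
  unfold F
  rw [sum_cons n (S k)]
  have : ∀ t : Fin n → Bool,
      S k (false :: List.ofFn t) + S k (true :: List.ofFn t)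
        = (S k (List.ofFn t) + S k (List.ofFn t)) + payoff k (hd1 (List.ofFn t)) := by
    intro t
    rw [S_cons_false, S_cons_true k hk]
    ring
  rw [Finset.sum_congr rfl fun t _ => this t, Finset.sum_add_distrib,
    Finset.sum_add_distrib, two_mul]

lemma F_lt (k n : ℕ) (h : n < k) : F k n = 0 := by
  unfold F
  refine Finset.sum_eq_zero fun s _ => ?_
  exact S_eq_zero (by simpa using h)

lemma F_base (k : ℕ) (hk : 1 ≤ k) : F k k = k := by
  have h := F_succ k (k-1) hk
  rw [F_lt k (k-1) (by omega), count_payoff' k hk] at h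
  rw [show k - 1 + 1 = k from by omega] at h
  omega

end Stmt10Aux

open Stmt10Aux in
/-- For `1 ≤ k ≤ n`, the total number of ones contained in runs of ones of length at
least `k`, summed over all binary strings of length `n`, equals
`(n*(k+1) - k*(k-1)) * 2^(n-k-1)`. -/
theorem stmt10 (n k : ℕ) (hk : 1 ≤ k) (hkn : k ≤ n) :
    ((∑ s : Fin n → Bool,
        ((oneRuns (List.ofFn s)).filter (fun x => k ≤ x)).sum : ℕ) : ℚ)
      = ((n : ℚ) * ((k : ℚ) + 1) - (k : ℚ) * ((k : ℚ) - 1)) * 2 ^ ((n : ℤ) - k - 1) := by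
  show ((F k n : ℕ) : ℚ) = _
  obtain ⟨d, rfl⟩ : ∃ d, n = k + d := ⟨n - k, by omega⟩
  clear hkn
  induction d with
  | zero =>
    rw [show k + 0 = k from rfl, F_base k hk]
    have he : (k : ℤ) - (k : ℤ) - 1 = -1 := by ring
    rw [he, zpow_neg_one]
    field_simp
    ring
  | succ d ih =>
    have hF : F k (k + (d + 1)) = 2 * F k (k + d) + (k + 1) * 2 ^ d := by
      have : k + (d + 1) = (k + d) + 1 := rfl
      rw [this, F_succ k (k + d) hk, count_payoff k (k + d) hk (by omega),
        Nat.add_sub_cancel_left]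
    rw [hF]
    have he : ((k + (d + 1) : ℕ) : ℤ) - (k : ℤ) - 1 = (d : ℤ) := by push_cast; ring
    have he' : ((k + d : ℕ) : ℤ) - (k : ℤ) - 1 = (d : ℤ) - 1 := by push_cast; ring
    rw [he]
    rw [he'] at ih
    have h2 : (2:ℚ) ^ ((d:ℤ) - 1) = 2 ^ (d:ℤ) / 2 := by
      rw [zpow_sub₀ (two_ne_zero), zpow_one]
    rw [h2] at ih
    have h3 : ((2 * F k (k + d) + (k + 1) * 2 ^ d : ℕ) : ℚ)
        = 2 * (F k (k + d) : ℚ) + ((k:ℚ) + 1) * 2 ^ (d:ℤ) := by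
      push_cast
      rw [zpow_natCast]
    rw [h3, ih]
    push_cast
    ring
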